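/- Let G be a finite simple graph with vertex set V, let a ≥ 1 and d₁, d₂ ≥ 0 be integers with d₁ ≤ a, and let V = V_D ⊔ V_S be a partition such that (i) any two distinct connected components of G[V_D] are at G-distance greater than a, and (ii) every connected component K of G[V_D] has diameter at most d₂ in G[K]. Let 𝒫 be a partition of V into clusters such that for every cluster P ∈ 𝒫 the induced subgraph G[P] is connected with diameter at most d₁. Let H be the spanning subgraph of G consisting of all edges with both endpoints in the same cluster together with all edges {u,v} whose endpoints lie in different clusters but satisfy u, v ∈ V_D. Then every connected component U of H is a union of clusters, contains the vertex set of at most one connected component of G[V_D], and the induced subgraph G[U] has diameter at most 2(d₁+1) + d₂. -/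

import Mathlib

/-!
Within a cluster every edge is kept and clusters are connected, so an `H`-component is a union of
clusters. An `H`-edge between different clusters joins two vertices of `V_D`; since two `V_D`
vertices of one cluster are at `G`-distance at most `d₁ ≤ a`, they lie in the same component of
`G[V_D]`, and following an `H`-walk shows that all `V_D` vertices of an `H`-component lie in one
component of `G[V_D]`. For `u, v` in different clusters of an `H`-component, the walk between them
must leave the cluster of `u` through a vertex `x ∈ V_D` and enter the cluster of `v` through a
vertex `y ∈ V_D`; a shortest `G[V_D]`-path from `x` to `y` stays in the component, so
`dist(u, v) ≤ d₁ + d₂ + d₁`.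
-/

open Finset

/-- The subgraph of `G` induced by the vertex set `S`, viewed as a graph on all of `V`
(vertices outside `S` are isolated). Distances between vertices of `S` in this graph agree
with distances in the induced subgraph `G[S]`. -/
def SimpleGraph.restrictS {V : Type*} (G : SimpleGraph V) (S : Set V) : SimpleGraph V where
  Adj u v := u ∈ S ∧ v ∈ S ∧ G.Adj u v
  symm := ⟨fun _ _ ⟨hu, hv, h⟩ => ⟨hv, hu, h.symm⟩⟩
  loopless := ⟨fun u ⟨_, _, h⟩ => G.loopless.irrefl u h⟩

lemma Finpartition.part_eq_part_iff {α : Type*} [Fintype α] [DecidableEq α]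
    (P : Finpartition (univ : Finset α)) {a b : α} :
    P.part a = P.part b ↔ ∃ p ∈ P.parts, a ∈ p ∧ b ∈ p := by
  rw [← P.mem_part_iff_part_eq_part (mem_univ a) (mem_univ b), P.mem_part_iff_exists]

lemma Finpartition.mem_part_comm {α : Type*} [DecidableEq α] {s : Finset α}
    (P : Finpartition s) {a b : α} : a ∈ P.part b ↔ b ∈ P.part a := by
  simp only [P.mem_part_iff_exists, And.comm (a := a ∈ _)]

namespace SimpleGraph

section Restrict

variable {V : Type*} {G K : SimpleGraph V} {U : Set V} {x y : V}

lemma restrictS_le (S : Set V) : G.restrictS S ≤ G :=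
  fun _ _ h => h.2.2

lemma restrictS_mono {S T : Set V} (h : S ⊆ T) : G.restrictS S ≤ G.restrictS T :=
  fun _ _ ⟨ha, hb, hadj⟩ => ⟨h ha, h hb, hadj⟩

lemma Reachable.mem_of_adj_closed (h : K.Reachable x y)
    (hU : ∀ a b, a ∈ U → K.Adj a b → b ∈ U) (hx : x ∈ U) : y ∈ U := by
  rw [reachable_iff_reflTransGen] at h
  induction h with
  | refl => exact hx
  | tail _ hab ih => exact hU _ _ ih hab

lemma exists_walk_restrictS_of_adj_closed (hKG : K ≤ G)
    (hU : ∀ a b, a ∈ U → K.Adj a b → b ∈ U) (w : K.Walk x y) (hx : x ∈ U) :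
    ∃ w' : (G.restrictS U).Walk x y, w'.length = w.length := by
  induction w with
  | nil => exact ⟨.nil, rfl⟩
  | @cons x x' y hadj w ih =>
    have hx' : x' ∈ U := hU x x' hx hadj
    obtain ⟨w', hw'⟩ := ih hx'
    exact ⟨.cons (show (G.restrictS U).Adj x x' from ⟨hx, hx', hKG hadj⟩) w', by simp [hw']⟩

lemma edist_restrictS_le_of_adj_closed (hKG : K ≤ G)
    (hU : ∀ a b, a ∈ U → K.Adj a b → b ∈ U) (hx : x ∈ U) :
    (G.restrictS U).edist x y ≤ K.edist x y := by
  rw [edist_eq_sInf (G := K)]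
  refine le_sInf ?_
  rintro _ ⟨w, rfl⟩
  obtain ⟨w', hw'⟩ := exists_walk_restrictS_of_adj_closed hKG hU w hx
  exact (edist_le w').trans_eq (congrArg _ hw')

lemma reachable_restrictS_of_edist_le {S : Set V} {a : ℕ}
    (hfar : ∀ u ∈ S, ∀ v ∈ S, ¬(G.restrictS S).Reachable u v → ((a : ℕ∞) < G.edist u v))
    (hx : x ∈ S) (hy : y ∈ S) (hxy : G.edist x y ≤ a) : (G.restrictS S).Reachable x y := by
  by_contra h
  exact (hfar x hx y hy h).not_ge hxy

end Restrict

section ClusterGraph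

variable {V : Type*} [Fintype V] [DecidableEq V]

/-- The graph `H` of the decomposition. -/
def clusterGraph (G : SimpleGraph V) (VD : Set V) (P : Finpartition (univ : Finset V)) :
    SimpleGraph V where
  Adj u v := G.Adj u v ∧ (P.part u = P.part v ∨ u ∈ VD ∧ v ∈ VD)
  symm := ⟨fun _ _ ⟨h, hc⟩ => ⟨h.symm, hc.imp Eq.symm And.symm⟩⟩
  loopless := ⟨fun u ⟨h, _⟩ => G.loopless.irrefl u h⟩

variable {G : SimpleGraph V} {VD U : Set V} {P : Finpartition (univ : Finset V)} {x y : V}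

lemma clusterGraph_adj : (G.clusterGraph VD P).Adj x y ↔
    G.Adj x y ∧ (P.part x = P.part y ∨ x ∈ VD ∧ y ∈ VD) :=
  Iff.rfl

lemma restrictS_part_le_clusterGraph (x : V) :
    G.restrictS (P.part x) ≤ G.clusterGraph VD P := fun _ _ ⟨ha, hb, hadj⟩ =>
  clusterGraph_adj.2 ⟨hadj, .inl ((P.part_eq_of_mem (P.part_mem.2 (mem_univ x)) ha).trans
    (P.part_eq_of_mem (P.part_mem.2 (mem_univ x)) hb).symm)⟩

lemma restrictS_le_clusterGraph : G.restrictS VD ≤ G.clusterGraph VD P :=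
  fun _ _ ⟨ha, hb, hadj⟩ => clusterGraph_adj.2 ⟨hadj, .inr ⟨ha, hb⟩⟩

lemma part_subset_of_adj_closed
    (hconn : ∀ p ∈ P.parts, ∀ u ∈ p, ∀ v ∈ p, (G.restrictS p).Reachable u v)
    (hU : ∀ a b, a ∈ U → (G.clusterGraph VD P).Adj a b → b ∈ U) (hx : x ∈ U) :
    ↑(P.part x) ⊆ U := fun y hy =>
  ((hconn _ (P.part_mem.2 (mem_univ x)) x (P.mem_part (mem_univ x)) y hy).mono
    (restrictS_part_le_clusterGraph x)).mem_of_adj_closed hU hx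

lemma reachable_restrictS_of_mem_part {a d₁ : ℕ}
    (hfar : ∀ u ∈ VD, ∀ v ∈ VD, ¬(G.restrictS VD).Reachable u v → ((a : ℕ∞) < G.edist u v))
    (hclusdiam : ∀ p ∈ P.parts, ∀ u ∈ p, ∀ v ∈ p, (G.restrictS (↑p : Set V)).edist u v ≤ d₁)
    (hd₁a : d₁ ≤ a) : ∀ u ∈ VD, ∀ v ∈ VD, v ∈ P.part u → (G.restrictS VD).Reachable u v :=
  fun u hu v hv huv => reachable_restrictS_of_edist_le hfar hu hv <|
    calc G.edist u v ≤ (G.restrictS (P.part u)).edist u v := edist_anti (restrictS_le _)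
      _ ≤ d₁ := hclusdiam _ (P.part_mem.2 (mem_univ u)) u (P.mem_part (mem_univ u)) v huv
      _ ≤ a := by exact_mod_cast hd₁a

lemma reachable_restrictS_of_reachable_clusterGraph
    (hclose : ∀ u ∈ VD, ∀ v ∈ VD, v ∈ P.part u → (G.restrictS VD).Reachable u v)
    (h : (G.clusterGraph VD P).Reachable x y) (hx : x ∈ VD) (hy : y ∈ VD) :
    (G.restrictS VD).Reachable x y := by
  let S : Set V := {z | ∃ w ∈ P.part z, w ∈ VD ∧ (G.restrictS VD).Reachable w y}
  have hS : ∀ a b, a ∈ S → (G.clusterGraph VD P).Adj a b → b ∈ S := by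
    rintro a b ⟨w, hw, hwVD, hwy⟩ hab
    obtain ⟨hab, hpart | ⟨ha, hb⟩⟩ := clusterGraph_adj.1 hab
    · exact ⟨w, hpart ▸ hw, hwVD, hwy⟩
    · have hba : (G.restrictS VD).Adj b a := ⟨hb, ha, hab.symm⟩
      exact ⟨b, P.mem_part (mem_univ b), hb,
        hba.reachable.trans ((hclose a ha w hwVD hw).trans hwy)⟩
  obtain ⟨w, hw, hwVD, hwy⟩ :=
    h.symm.mem_of_adj_closed hS ⟨y, P.mem_part (mem_univ y), hy, .refl y⟩
  exact (hclose x hx w hwVD hw).trans hwy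

lemma exists_mem_part_of_reachable_clusterGraph (h : (G.clusterGraph VD P).Reachable x y)
    (hy : y ∉ P.part x) : ∃ z ∈ P.part x, z ∈ VD := by
  by_contra! hno
  have hclosed : ∀ a b, a ∈ (P.part x : Set V) → (G.clusterGraph VD P).Adj a b →
      b ∈ (P.part x : Set V) := by
    rintro a b ha hab
    obtain ⟨_, hpart | ⟨haVD, _⟩⟩ := clusterGraph_adj.1 hab
    · rw [← P.part_eq_of_mem (P.part_mem.2 (mem_univ x)) ha, hpart]
      exact P.mem_part (mem_univ b)
    · exact absurd haVD (hno a ha)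
  exact hy (h.mem_of_adj_closed hclosed (P.mem_part (mem_univ x)))

lemma edist_restrictS_le_of_mem_part {d₁ : ℕ}
    (hclusdiam : ∀ p ∈ P.parts, ∀ u ∈ p, ∀ v ∈ p, (G.restrictS (↑p : Set V)).edist u v ≤ d₁)
    (hxU : ↑(P.part x) ⊆ U) {a b : V} (ha : a ∈ P.part x) (hb : b ∈ P.part x) :
    (G.restrictS U).edist a b ≤ d₁ :=
  (edist_anti (restrictS_mono hxU)).trans
    (hclusdiam _ (P.part_mem.2 (mem_univ x)) a ha b hb)

lemma edist_restrictS_le_of_reachable_clusterGraph {d₁ d₂ : ℕ}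
    (hcompdiam : ∀ u ∈ VD, ∀ v ∈ VD, (G.restrictS VD).Reachable u v →
      (G.restrictS VD).edist u v ≤ d₂)
    (hclusdiam : ∀ p ∈ P.parts, ∀ u ∈ p, ∀ v ∈ p, (G.restrictS (↑p : Set V)).edist u v ≤ d₁)
    (hU : ∀ a b, a ∈ U → (G.clusterGraph VD P).Adj a b → b ∈ U)
    (hpartU : ∀ z ∈ U, ↑(P.part z) ⊆ U)
    (hUVD : ∀ u ∈ U ∩ VD, ∀ v ∈ U ∩ VD, (G.restrictS VD).Reachable u v)
    (hx : x ∈ U) (hy : y ∈ U) (hxy : (G.clusterGraph VD P).Reachable x y) :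
    (G.restrictS U).edist x y ≤ d₁ + d₂ + d₁ := by
  by_cases hpart : y ∈ P.part x
  · calc (G.restrictS U).edist x y ≤ d₁ :=
          edist_restrictS_le_of_mem_part hclusdiam (hpartU x hx) (P.mem_part (mem_univ x)) hpart
      _ ≤ d₁ + d₂ + d₁ := by norm_cast; omega
  obtain ⟨x', hx'p, hx'VD⟩ := exists_mem_part_of_reachable_clusterGraph hxy hpart
  obtain ⟨y', hy'p, hy'VD⟩ :=
    exists_mem_part_of_reachable_clusterGraph hxy.symm (P.mem_part_comm.not.1 hpart)
  have hx'U : x' ∈ U := hpartU x hx hx'p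
  have hy'U : y' ∈ U := hpartU y hy hy'p
  have hUK : ∀ a b, a ∈ U → (G.restrictS VD).Adj a b → b ∈ U :=
    fun a b ha hab => hU a b ha (restrictS_le_clusterGraph hab)
  calc (G.restrictS U).edist x y
      ≤ (G.restrictS U).edist x x' + ((G.restrictS U).edist x' y' + (G.restrictS U).edist y' y) :=
        SimpleGraph.edist_triangle.trans (by gcongr; exact SimpleGraph.edist_triangle)
    _ ≤ d₁ + (d₂ + d₁) := by
      gcongr
      · exact edist_restrictS_le_of_mem_part hclusdiam (hpartU x hx)
          (P.mem_part (mem_univ x)) hx'p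
      · exact (edist_restrictS_le_of_adj_closed (restrictS_le VD) hUK hx'U).trans
          (hcompdiam x' hx'VD y' hy'VD (hUVD x' ⟨hx'U, hx'VD⟩ y' ⟨hy'U, hy'VD⟩))
      · exact edist_restrictS_le_of_mem_part hclusdiam (hpartU y hy) hy'p
          (P.mem_part (mem_univ y))
    _ = d₁ + d₂ + d₁ := (add_assoc _ _ _).symm

end ClusterGraph

end SimpleGraph

open SimpleGraph in
theorem low_diam_decomposition_component_diameter_general
    {V : Type*} [Fintype V] [DecidableEq V] (G : SimpleGraph V)
    (a d₁ d₂ : ℕ) (hd₁a : d₁ ≤ a)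
    (VD : Set V)
    (hfar : ∀ u ∈ VD, ∀ v ∈ VD, ¬(G.restrictS VD).Reachable u v →
      ((a : ℕ∞) < G.edist u v))
    (hcompdiam : ∀ u ∈ VD, ∀ v ∈ VD, (G.restrictS VD).Reachable u v →
      (G.restrictS VD).edist u v ≤ (d₂ : ℕ∞))
    (P : Finpartition (Finset.univ : Finset V))
    (hclusdiam : ∀ p ∈ P.parts, ∀ u ∈ p, ∀ v ∈ p,
      (G.restrictS (↑p : Set V)).edist u v ≤ (d₁ : ℕ∞))
    (H : SimpleGraph V)
    (hH : ∀ u v, H.Adj u v ↔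
      (G.Adj u v ∧ ((∃ p ∈ P.parts, u ∈ p ∧ v ∈ p) ∨ (u ∈ VD ∧ v ∈ VD))))
    (u₀ : V) (U : Set V) (hU : U = {v | H.Reachable u₀ v}) :
    (∀ p ∈ P.parts, (∃ x ∈ p, x ∈ U) → (↑p : Set V) ⊆ U) ∧
    (∀ u ∈ U ∩ VD, ∀ v ∈ U ∩ VD, (G.restrictS VD).Reachable u v) ∧
    (∀ u ∈ U, ∀ v ∈ U,
      (G.restrictS U).edist u v ≤ ((2 * (d₁ + 1) + d₂ : ℕ) : ℕ∞)) := by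
  obtain rfl : H = G.clusterGraph VD P := by
    ext u v
    rw [hH, clusterGraph_adj, P.part_eq_part_iff]
  have hreach : ∀ u ∈ U, ∀ v ∈ U, (G.clusterGraph VD P).Reachable u v := by
    subst hU
    exact fun u hu v hv => hu.symm.trans hv
  have hclosed : ∀ x y, x ∈ U → (G.clusterGraph VD P).Adj x y → y ∈ U := by
    subst hU
    exact fun _ _ hx hxy => hx.trans hxy.reachable
  have hconn : ∀ p ∈ P.parts, ∀ u ∈ p, ∀ v ∈ p, (G.restrictS p).Reachable u v :=
    fun p hp u hu v hv => reachable_of_edist_ne_top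
      ((hclusdiam p hp u hu v hv).trans_lt (ENat.natCast_lt_top d₁)).ne
  have hpartU : ∀ x ∈ U, ↑(P.part x) ⊆ U :=
    fun x hx => part_subset_of_adj_closed hconn hclosed hx
  have hUVD : ∀ u ∈ U ∩ VD, ∀ v ∈ U ∩ VD, (G.restrictS VD).Reachable u v :=
    fun u hu v hv => reachable_restrictS_of_reachable_clusterGraph
      (reachable_restrictS_of_mem_part hfar hclusdiam hd₁a) (hreach u hu.1 v hv.1) hu.2 hv.2
  refine ⟨fun p hp ⟨x, hxp, hx⟩ => P.part_eq_of_mem hp hxp ▸ hpartU x hx, hUVD,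
    fun u hu v hv => ?_⟩
  calc (G.restrictS U).edist u v ≤ d₁ + d₂ + d₁ :=
        edist_restrictS_le_of_reachable_clusterGraph hcompdiam hclusdiam hclosed hpartU hUVD
          hu hv (hreach u hu v hv)
    _ ≤ ((2 * (d₁ + 1) + d₂ : ℕ) : ℕ∞) := by norm_cast; omega

/-- diameter claim in Lemma B.3, analysis of LowDiamDecomposition.
Let `a ≥ 1` and `d₁ ≤ a`, `d₂ ≥ 0`, and let `V = V_D ⊔ V_S` be a partition such that
(i) distinct connected components of `G[V_D]` are at `G`-distance greater than `a`, and
(ii) every connected component of `G[V_D]` has diameter at most `d₂`. Let `𝒫` be a partition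
of `V` into clusters, each inducing a connected subgraph of diameter at most `d₁`. Let `H`
consist of all edges of `G` inside a cluster together with all inter-cluster edges with both
endpoints in `V_D`. Then every connected component `U` of `H` is a union of clusters,
contains the vertex set of at most one connected component of `G[V_D]`, and `G[U]` has
diameter at most `2(d₁+1) + d₂`. -/
theorem low_diam_decomposition_component_diameter
    {V : Type*} [Fintype V] [DecidableEq V] (G : SimpleGraph V)
    (a d₁ d₂ : ℕ) (ha : 1 ≤ a) (hd₁a : d₁ ≤ a)
    (VD VS : Set V) (hunion : VD ∪ VS = Set.univ) (hdisj : Disjoint VD VS)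
    (hfar : ∀ u ∈ VD, ∀ v ∈ VD, ¬(G.restrictS VD).Reachable u v →
      ((a : ℕ∞) < G.edist u v))
    (hcompdiam : ∀ u ∈ VD, ∀ v ∈ VD, (G.restrictS VD).Reachable u v →
      (G.restrictS VD).edist u v ≤ (d₂ : ℕ∞))
    (P : Finpartition (Finset.univ : Finset V))
    (hclusdiam : ∀ p ∈ P.parts, ∀ u ∈ p, ∀ v ∈ p,
      (G.restrictS (↑p : Set V)).edist u v ≤ (d₁ : ℕ∞))
    (H : SimpleGraph V)
    (hH : ∀ u v, H.Adj u v ↔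
      (G.Adj u v ∧ ((∃ p ∈ P.parts, u ∈ p ∧ v ∈ p) ∨ (u ∈ VD ∧ v ∈ VD))))
    (u₀ : V) (U : Set V) (hU : U = {v | H.Reachable u₀ v}) :
    (∀ p ∈ P.parts, (∃ x ∈ p, x ∈ U) → (↑p : Set V) ⊆ U) ∧
    (∀ u ∈ U ∩ VD, ∀ v ∈ U ∩ VD, (G.restrictS VD).Reachable u v) ∧
    (∀ u ∈ U, ∀ v ∈ U,
      (G.restrictS U).edist u v ≤ ((2 * (d₁ + 1) + d₂ : ℕ) : ℕ∞)) :=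
  low_diam_decomposition_component_diameter_general G a d₁ d₂ hd₁a VD hfar hcompdiam P hclusdiam H
    hH u₀ U hU
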